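/- arXiv:2408.01158 — 3 statements merged into one kernel-verified Lean document; each statement's English description precedes it below -/
import Mathlib

section
/- For the complex number s = σ + iω with σ > 0 and a constant ħ > 0, the real part of b·s|s|²/(ħs² + 1) equals b·σ·(σ² + ω²)·(ħ(σ² + ω²) + 1) / ((ħ(σ² − ω²) + 1)² + 4σ²ω²ħ²), and in particular it is nonnegative for every b ≥ 0. -/
open Complex

/- Writing s = σ + iω, the denominator ħs² + 1 has real part ħ(σ² − ω²) + 1 and imaginary part
2ħσω, so Re(s / (ħs² + 1)) = σ(ħ|s|² + 1) / |ħs² + 1|². The factor b|s|² is real, and every factor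
of the resulting quotient is nonnegative when σ > 0, ħ > 0 and b ≥ 0. -/

lemma normSq_ofReal_mul_sq_add_one (h : ℝ) (z : ℂ) :
    normSq (h * z ^ 2 + 1) = (h * (z.re ^ 2 - z.im ^ 2) + 1) ^ 2 + 4 * z.re ^ 2 * z.im ^ 2 * h ^ 2 := by
  simp only [normSq_apply, pow_two, add_re, add_im, mul_re, mul_im, ofReal_re, ofReal_im, one_re,
    one_im]
  ring

lemma re_div_ofReal_mul_sq_add_one (h : ℝ) (z : ℂ) :
    (z / (h * z ^ 2 + 1)).re = z.re * (h * normSq z + 1) / normSq (h * z ^ 2 + 1) := by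
  rw [div_re, ← add_div]
  congr 1
  simp only [normSq_apply, pow_two, add_re, add_im, mul_re, mul_im, ofReal_re, ofReal_im, one_re,
    one_im]
  ring

theorem stmt0 (σ ω hbar b : ℝ) (hσ : 0 < σ) (hhbar : 0 < hbar) (hb : 0 ≤ b)
    (s : ℂ) (hs : s = Complex.mk σ ω) :
    ((b : ℂ) * s * ((‖s‖ : ℝ) : ℂ) ^ 2 / ((hbar : ℂ) * s ^ 2 + 1)).re =
      b * σ * (σ ^ 2 + ω ^ 2) * (hbar * (σ ^ 2 + ω ^ 2) + 1) /
        ((hbar * (σ ^ 2 - ω ^ 2) + 1) ^ 2 + 4 * σ ^ 2 * ω ^ 2 * hbar ^ 2) ∧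
    0 ≤ ((b : ℂ) * s * ((‖s‖ : ℝ) : ℂ) ^ 2 / ((hbar : ℂ) * s ^ 2 + 1)).re := by
  have hnormSq : normSq s = σ ^ 2 + ω ^ 2 := by
    rw [hs, normSq_mk]
    ring
  have hreal : (b : ℂ) * s * ((‖s‖ : ℝ) : ℂ) ^ 2 = ((b * normSq s : ℝ) : ℂ) * s := by
    rw [← ofReal_pow, Complex.sq_norm]
    push_cast
    ring
  have key : ((b : ℂ) * s * ((‖s‖ : ℝ) : ℂ) ^ 2 / ((hbar : ℂ) * s ^ 2 + 1)).re =
      b * σ * (σ ^ 2 + ω ^ 2) * (hbar * (σ ^ 2 + ω ^ 2) + 1) /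
        ((hbar * (σ ^ 2 - ω ^ 2) + 1) ^ 2 + 4 * σ ^ 2 * ω ^ 2 * hbar ^ 2) := by
    rw [hreal, mul_div_assoc, re_ofReal_mul, re_div_ofReal_mul_sq_add_one,
      normSq_ofReal_mul_sq_add_one, hnormSq, hs]
    ring
  refine ⟨key, key ▸ div_nonneg ?_ (by positivity)⟩
  positivity
end

section
/- For s = σ + iω with σ > 0, the sesquilinear form a(u, s·u) := c₀^{−1} s̄ |s|² ‖u‖²_{L²} + s̄ ‖∇u‖²_{L²} + (b/ħ) s̄ ‖χ_Ω u‖²_{L²} − (b/ħ) s̄ (ħs² + 1)^{−1} ‖χ_Ω u‖²_{L²} satisfies |a(u, s·u)| ≥ Re(a(u, s·u)) ≥ min{σ, σ³} ‖u‖²_{H¹(ℝ³)} (up to the constant min{c₀^{−1},1}) for all u ∈ H¹(ℝ³). -/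
/-!
Taking real parts, `Re a = c₀⁻¹ |s|² σ A + σ G + (b/ħ) Xq · Re(s̄ - s̄/(ħs² + 1))`.
The last term is nonnegative: `s̄ - s̄/(ħs² + 1) = ħ|s|² · s/(ħs² + 1)`, and
`Re(s · conj(ħs² + 1)) = Re(ħ|s|² s̄ + s) = σ(ħ|s|² + 1) ≥ 0`.
The first two terms dominate `min{c₀⁻¹, 1} · min{σ, σ³} · (A + G)` because `|s|² ≥ σ²`.
-/

open MeasureTheory ComplexConjugate

namespace Complex

lemma re_div_mul_sq_add_one_nonneg {h : ℝ} (hh : 0 ≤ h) {s : ℂ} (hs : 0 ≤ s.re) :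
    0 ≤ (s / (h * s ^ 2 + 1)).re := by
  have hnum : (s * conj (h * s ^ 2 + 1)).re = s.re * (h * normSq s + 1) := by
    have hexpand : s * conj (h * s ^ 2 + 1) = (h * normSq s : ℝ) * conj s + s := by
      simp only [map_add, map_mul, map_pow, conj_ofReal, map_one, ofReal_mul,
        normSq_eq_conj_mul_self]
      ring
    rw [hexpand]
    simp only [add_re, re_ofReal_mul, conj_re]
    ring
  rw [div_eq_mul_inv, inv_def, ← mul_assoc, re_mul_ofReal, hnum]
  have := normSq_nonneg s
  have := normSq_nonneg (h * s ^ 2 + 1)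
  positivity

lemma re_conj_sub_conj_div_mul_sq_add_one_nonneg {h : ℝ} (hh : 0 ≤ h) {s : ℂ} (hs : 0 ≤ s.re) :
    0 ≤ (conj s - conj s / (h * s ^ 2 + 1)).re := by
  by_cases hD : (h : ℂ) * s ^ 2 + 1 = 0
  · simpa [hD] using hs
  have hfactor : conj s - conj s / (h * s ^ 2 + 1) = (h * normSq s : ℝ) * (s / (h * s ^ 2 + 1)) := by
    field_simp
    rw [ofReal_mul, normSq_eq_conj_mul_self]
    ring
  rw [hfactor, re_ofReal_mul]
  exact mul_nonneg (mul_nonneg hh (normSq_nonneg s)) (re_div_mul_sq_add_one_nonneg hh hs)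

end Complex

lemma min_mul_min_mul_add_le {k σ A G : ℝ} (ω : ℝ) (hk : 0 < k) (hσ : 0 < σ)
    (hA : 0 ≤ A) (hG : 0 ≤ G) :
    min k 1 * min σ (σ ^ 3) * (A + G) ≤ k * (σ ^ 2 + ω ^ 2) * σ * A + σ * G := by
  have hm : 0 ≤ min σ (σ ^ 3) := le_min hσ.le (by positivity)
  have hA' : min k 1 * min σ (σ ^ 3) ≤ k * (σ ^ 2 + ω ^ 2) * σ :=
    calc min k 1 * min σ (σ ^ 3) ≤ k * σ ^ 3 :=
          mul_le_mul (min_le_left _ _) (min_le_right _ _) hm hk.le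
      _ ≤ k * (σ ^ 2 + ω ^ 2) * σ := by nlinarith [mul_nonneg (mul_nonneg hk.le hσ.le) (sq_nonneg ω)]
  have hG' : min k 1 * min σ (σ ^ 3) ≤ σ :=
    calc min k 1 * min σ (σ ^ 3) ≤ 1 * σ :=
          mul_le_mul (min_le_right _ _) (min_le_left _ _) hm zero_le_one
      _ = σ := one_mul σ
  nlinarith [mul_le_mul_of_nonneg_right hA' hA, mul_le_mul_of_nonneg_right hG' hG]

theorem stmt9_general (c₀ b hbar σ ω : ℝ) (hc₀ : 0 < c₀) (hb : 0 < b) (hhbar : 0 < hbar)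
    (hσ : 0 < σ) (s : ℂ) (hs : s = Complex.mk σ ω)
    (Ω : Set (EuclideanSpace ℝ (Fin 3)))
    (u : EuclideanSpace ℝ (Fin 3) → ℂ)
    (A G Xq : ℝ)
    (hA : A = ∫ x, ‖u x‖ ^ 2) (hG : G = ∫ x, ‖fderiv ℝ u x‖ ^ 2)
    (hXq : Xq = ∫ x in Ω, ‖u x‖ ^ 2)
    (a : ℂ)
    (ha : a = (c₀⁻¹ : ℂ) * (starRingEnd ℂ) s * ((‖s‖ : ℝ) : ℂ) ^ 2 * (A : ℂ) +
      (starRingEnd ℂ) s * (G : ℂ) + ((b / hbar : ℝ) : ℂ) * (starRingEnd ℂ) s * (Xq : ℂ) -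
      ((b / hbar : ℝ) : ℂ) * (starRingEnd ℂ) s / ((hbar : ℂ) * s ^ 2 + 1) * (Xq : ℂ)) :
    min c₀⁻¹ 1 * min σ (σ ^ 3) * (A + G) ≤ a.re ∧ a.re ≤ ‖a‖ := by
  have hA0 : 0 ≤ A := hA ▸ integral_nonneg fun _ => by positivity
  have hG0 : 0 ≤ G := hG ▸ integral_nonneg fun _ => by positivity
  have hXq0 : 0 ≤ Xq := hXq ▸ integral_nonneg fun _ => by positivity
  set T := conj s - conj s / (hbar * s ^ 2 + 1)
  have hT : 0 ≤ T.re :=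
    Complex.re_conj_sub_conj_div_mul_sq_add_one_nonneg hhbar.le (by simp [hs, hσ.le])
  have hre : a.re = c₀⁻¹ * (σ ^ 2 + ω ^ 2) * σ * A + σ * G + b / hbar * Xq * T.re := by
    have ha' : a = ((c₀⁻¹ * Complex.normSq s * A : ℝ) : ℂ) * conj s + (G : ℂ) * conj s
        + ((b / hbar * Xq : ℝ) : ℂ) * T := by
      rw [ha, ← Complex.ofReal_pow, ← Complex.normSq_eq_norm_sq]
      push_cast
      ring
    simp only [ha', Complex.add_re, Complex.re_ofReal_mul, Complex.conj_re,
      Complex.normSq_apply, hs]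
    ring
  refine ⟨?_, Complex.re_le_norm a⟩
  rw [hre]
  have hmain := min_mul_min_mul_add_le ω (inv_pos.2 hc₀) hσ hA0 hG0
  have hmemory : 0 ≤ b / hbar * Xq * T.re := by positivity
  linarith

theorem stmt9 (c₀ b hbar σ ω : ℝ) (hc₀ : 0 < c₀) (hb : 0 < b) (hhbar : 0 < hbar)
    (hσ : 0 < σ) (s : ℂ) (hs : s = Complex.mk σ ω)
    (Ω : Set (EuclideanSpace ℝ (Fin 3))) (hΩ : MeasurableSet Ω)
    (u : EuclideanSpace ℝ (Fin 3) → ℂ)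
    (hu : MemLp u 2 volume) (hu' : Differentiable ℝ u)
    (hgrad : Integrable (fun x => ‖fderiv ℝ u x‖ ^ 2))
    (A G Xq : ℝ)
    (hA : A = ∫ x, ‖u x‖ ^ 2) (hG : G = ∫ x, ‖fderiv ℝ u x‖ ^ 2)
    (hXq : Xq = ∫ x in Ω, ‖u x‖ ^ 2)
    (a : ℂ)
    (ha : a = (c₀⁻¹ : ℂ) * (starRingEnd ℂ) s * ((‖s‖ : ℝ) : ℂ) ^ 2 * (A : ℂ) +
      (starRingEnd ℂ) s * (G : ℂ) + ((b / hbar : ℝ) : ℂ) * (starRingEnd ℂ) s * (Xq : ℂ) -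
      ((b / hbar : ℝ) : ℂ) * (starRingEnd ℂ) s / ((hbar : ℂ) * s ^ 2 + 1) * (Xq : ℂ)) :
    min c₀⁻¹ 1 * min σ (σ ^ 3) * (A + G) ≤ a.re ∧ a.re ≤ ‖a‖ :=
  stmt9_general c₀ b hbar σ ω hc₀ hb hhbar hσ s hs Ω u A G Xq hA hG hXq a ha
end

section
/- Let f : Ω × [0,T] → ℝ with f(·, t) Lipschitz in x uniformly in t (constant L₁) and f(y, ·) Lipschitz in t uniformly in y (constant L₂), and let Ω_j ⊂ Ω have volume ε with center z_j and diameter ≤ C ε^{1/3}. Then for any x with dist(x, Ω_j) ≥ d > 0, | ∫_{Ω_j} f(y, t − c₀^{−1}|x − y|)/(4π|x − y|) dy − ε f(z_j, t − c₀^{−1}|x − z_j|)/(4π|x − z_j|) | ≤ C' (L₁ + L₂ + ‖f‖_∞) ε^{4/3} / d². -/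
open MeasureTheory
open scoped NNReal ENNReal

/-!
The integrand `g y = f(y, t - |x - y|/c₀) / (4π|x - y|)` of the retarded potential varies by at most
`(L₁ + L₂/c₀ + ‖f‖_∞) · diam Ωⱼ / d²` over `Ωⱼ`: moving `y` changes `f` through both of its
arguments (the retarded time moves by at most `|y - z|/c₀`), and changes `1/|x - y|` by at most
`|y - z|/d²` (the first change, of order `|y - z|/d`, is also `≤ |y - z|/d²` as `d ≤ 1`).
Integrating this against the volume `ε` of `Ωⱼ`, with `diam Ωⱼ ≤ C ε^{1/3}`,
gives the error `C' (L₁ + L₂ + ‖f‖_∞) ε^{4/3} / d²` of the one-point quadrature rule.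
-/

section

variable {α β γ : Type*} [PseudoMetricSpace α] [PseudoMetricSpace β] [PseudoMetricSpace γ]

theorem LipschitzWith.dist_apply₂_le {f : α → β → γ} {K₁ K₂ : ℝ≥0}
    (h₁ : ∀ b, LipschitzWith K₁ (f · b)) (h₂ : ∀ a, LipschitzWith K₂ (f a)) (a a' : α) (b b' : β) :
    dist (f a b) (f a' b') ≤ K₁ * dist a a' + K₂ * dist b b' :=
  calc dist (f a b) (f a' b') ≤ dist (f a b) (f a' b) + dist (f a' b) (f a' b') :=
        dist_triangle _ _ _
    _ ≤ K₁ * dist a a' + K₂ * dist b b' :=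
        add_le_add ((h₁ b).dist_le_mul a a') ((h₂ a').dist_le_mul b b')

theorem abs_dist_sub_dist_le (x y z : α) : |dist x y - dist x z| ≤ dist y z := by
  simpa only [dist_comm x] using abs_dist_sub_le y z x

theorem dist_retardedTime_le {c : ℝ} (hc : 0 < c) (t : ℝ) (x y z : α) :
    dist (t - c⁻¹ * dist x y) (t - c⁻¹ * dist x z) ≤ c⁻¹ * dist y z := by
  rw [Real.dist_eq, show t - c⁻¹ * dist x y - (t - c⁻¹ * dist x z)
      = -(c⁻¹ * (dist x y - dist x z)) by ring, abs_neg, abs_mul,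
    abs_of_pos (inv_pos.mpr hc)]
  exact mul_le_mul_of_nonneg_left (abs_dist_sub_dist_le x y z) (inv_pos.mpr hc).le

end

theorem abs_div_sub_div_le {A B r s d : ℝ} (hd : 0 < d) (hr : d ≤ r) (hs : d ≤ s) :
    |A / r - B / s| ≤ |A - B| / d + |B| * |r - s| / d ^ 2 := by
  have hr₀ : 0 < r := hd.trans_le hr
  have hs₀ : 0 < s := hd.trans_le hs
  have hsplit : A / r - B / s = (A - B) / r + B * (s - r) / (r * s) := by
    field_simp
    ring
  calc |A / r - B / s| ≤ |A - B| / r + |B| * |s - r| / (r * s) := by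
        rw [hsplit]
        refine (abs_add_le _ _).trans_eq ?_
        rw [abs_div, abs_div, abs_mul, abs_of_pos hr₀, abs_of_pos (mul_pos hr₀ hs₀)]
    _ ≤ |A - B| / d + |B| * |r - s| / d ^ 2 := by
        rw [abs_sub_comm s r, sq]
        gcongr

noncomputable def retardedKernel {α : Type*} [PseudoMetricSpace α] (c t : ℝ) (x : α)
    (f : α → ℝ → ℝ) (y : α) : ℝ :=
  f y (t - c⁻¹ * dist x y) / (4 * Real.pi * dist x y)

section RetardedKernel

variable {α : Type*} [PseudoMetricSpace α] {c t d M : ℝ} {K₁ K₂ : ℝ≥0} {x : α}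
  {f : α → ℝ → ℝ}

theorem abs_retardedKernel_sub_le (hc : 0 < c) (hd : 0 < d) (hd₁ : d ≤ 1)
    (hM : ∀ y t', |f y t'| ≤ M) (h₁ : ∀ t', LipschitzWith K₁ (f · t'))
    (h₂ : ∀ y, LipschitzWith K₂ (f y)) {y z : α} (hy : d ≤ dist x y) (hz : d ≤ dist x z) :
    |retardedKernel c t x f y - retardedKernel c t x f z|
      ≤ (K₁ + c⁻¹ * K₂ + M) * dist y z / d ^ 2 := by
  set Fy := f y (t - c⁻¹ * dist x y)
  set Fz := f z (t - c⁻¹ * dist x z)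
  have hF : |Fy - Fz| ≤ (K₁ + c⁻¹ * K₂) * dist y z := by
    refine (LipschitzWith.dist_apply₂_le h₁ h₂ _ _ _ _).trans ?_
    have := dist_retardedTime_le hc t x y z
    rw [add_mul, mul_assoc, mul_left_comm]
    gcongr
  have hr : |dist x y - dist x z| ≤ dist y z := abs_dist_sub_dist_le x y z
  have h4π : 1 ≤ 4 * Real.pi := by linarith [Real.pi_gt_three]
  have hkernel : retardedKernel c t x f y - retardedKernel c t x f z
      = (Fy / dist x y - Fz / dist x z) / (4 * Real.pi) := by
    simp only [retardedKernel, Fy, Fz, div_div, sub_div]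
    ring_nf
  have hM₀ : 0 ≤ M := (abs_nonneg _).trans (hM y 0)
  have hd₂ : d ^ 2 ≤ d := by nlinarith
  calc |retardedKernel c t x f y - retardedKernel c t x f z|
      ≤ |Fy / dist x y - Fz / dist x z| := by
        rw [hkernel, abs_div, abs_of_pos (by positivity : (0 : ℝ) < 4 * Real.pi)]
        exact div_le_self (abs_nonneg _) h4π
    _ ≤ |Fy - Fz| / d + |Fz| * |dist x y - dist x z| / d ^ 2 := abs_div_sub_div_le hd hy hz
    _ ≤ (K₁ + c⁻¹ * K₂) * dist y z / d ^ 2 + M * dist y z / d ^ 2 := by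
        gcongr ?_ + ?_
        · calc |Fy - Fz| / d ≤ (K₁ + c⁻¹ * K₂) * dist y z / d := by gcongr
            _ ≤ (K₁ + c⁻¹ * K₂) * dist y z / d ^ 2 := by gcongr
        · gcongr
          exact hM z _
    _ = (K₁ + c⁻¹ * K₂ + M) * dist y z / d ^ 2 := by ring

theorem integrableOn_retardedKernel [MeasurableSpace α] [OpensMeasurableSpace α] {μ : Measure α}
    {s : Set α} (hs : MeasurableSet s) (hμs : μ s ≠ ∞) (hd : 0 < d) (hsx : ∀ y ∈ s, d ≤ dist x y)
    (hM : ∀ y t', |f y t'| ≤ M) (h₁ : ∀ t', LipschitzWith K₁ (f · t'))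
    (h₂ : ∀ y, LipschitzWith K₂ (f y)) :
    IntegrableOn (retardedKernel c t x f) s μ := by
  have hf : Continuous fun y => f y (t - c⁻¹ * dist x y) :=
    (LipschitzWith.uncurry h₁ h₂).continuous.comp
      (continuous_id.prodMk (continuous_const.sub (continuous_const.mul
        (continuous_const.dist continuous_id))))
  have hmeas : Measurable (retardedKernel c t x f) :=
    hf.measurable.div (continuous_const.mul (continuous_const.dist continuous_id)).measurable
  refine Measure.integrableOn_of_bounded hμs hmeas.aestronglyMeasurable (M := M / d)
    ((ae_restrict_iff' hs).mpr (Filter.Eventually.of_forall fun y hy => ?_))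
  have hdy : d ≤ 4 * Real.pi * dist x y := by nlinarith [Real.pi_gt_three, hsx y hy]
  rw [Real.norm_eq_abs, retardedKernel, abs_div, abs_of_pos (hd.trans_le hdy)]
  exact div_le_div₀ ((abs_nonneg _).trans (hM y 0)) (hM _ _) hd hdy

end RetardedKernel

theorem norm_setIntegral_sub_measureReal_smul_le {X E : Type*} [MeasurableSpace X]
    [NormedAddCommGroup E] [NormedSpace ℝ E] [CompleteSpace E] {μ : Measure X} {s : Set X}
    {g : X → E} {z : X} {K : ℝ} (hμs : μ s ≠ ∞) (hg : IntegrableOn g s μ)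
    (hK : ∀ y ∈ s, ‖g y - g z‖ ≤ K) :
    ‖(∫ y in s, g y ∂μ) - μ.real s • g z‖ ≤ K * μ.real s := by
  rw [← setIntegral_const, ← integral_sub hg (integrableOn_const hμs)]
  exact norm_setIntegral_le_of_norm_le_const hμs.lt_top hK

theorem stmt15 (c₀ Cd : ℝ) (hc₀ : 0 < c₀) (hCd : 0 < Cd) :
    ∃ C' > 0, ∀ (Ωj : Set (EuclideanSpace ℝ (Fin 3)))
      (zj x : EuclideanSpace ℝ (Fin 3)) (f : EuclideanSpace ℝ (Fin 3) → ℝ → ℝ)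
      (L₁ L₂ M ε d t : ℝ),
      MeasurableSet Ωj → volume Ωj = ENNReal.ofReal ε → 0 < ε → zj ∈ Ωj →
      EMetric.diam Ωj ≤ ENNReal.ofReal (Cd * ε ^ ((1 : ℝ) / 3)) →
      0 ≤ L₁ → 0 ≤ L₂ → 0 ≤ M →
      (∀ y t', |f y t'| ≤ M) →
      (∀ t', LipschitzWith (Real.toNNReal L₁) (fun y => f y t')) →
      (∀ y, LipschitzWith (Real.toNNReal L₂) (f y)) →
      0 < d → d ≤ 1 →
      (∀ y ∈ convexHull ℝ Ωj, d ≤ dist x y) →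
      |(∫ y in Ωj, f y (t - c₀⁻¹ * dist x y) / (4 * Real.pi * dist x y)) -
          ε * f zj (t - c₀⁻¹ * dist x zj) / (4 * Real.pi * dist x zj)| ≤
        C' * (L₁ + L₂ + M) * ε ^ ((4 : ℝ) / 3) / d ^ 2 := by
  refine ⟨(1 + c₀⁻¹) * Cd, by positivity, ?_⟩
  intro Ωj zj x f L₁ L₂ M ε d t hmeas hvol hε hzj hdiam hL₁ hL₂ _ hfM hlip₁ hlip₂ hd hd₁ hdist
  have hΩx : ∀ y ∈ Ωj, d ≤ dist x y := fun y hy => hdist y (subset_convexHull ℝ Ωj hy)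
  have hΩz : ∀ y ∈ Ωj, dist y zj ≤ Cd * ε ^ ((1 : ℝ) / 3) := fun y hy =>
    (edist_le_ofReal (by positivity)).mp ((Metric.edist_le_ediam_of_mem hy hzj).trans hdiam)
  have hμΩ : volume Ωj ≠ ∞ := hvol ▸ ENNReal.ofReal_ne_top
  have hμΩ' : volume.real Ωj = ε := by rw [measureReal_def, hvol, ENNReal.toReal_ofReal hε.le]
  have hosc : ∀ y ∈ Ωj, ‖retardedKernel c₀ t x f y - retardedKernel c₀ t x f zj‖
      ≤ (L₁ + c₀⁻¹ * L₂ + M) * (Cd * ε ^ ((1 : ℝ) / 3)) / d ^ 2 := fun y hy => by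
    have := abs_retardedKernel_sub_le (t := t) hc₀ hd hd₁ hfM hlip₁ hlip₂ (hΩx y hy) (hΩx zj hzj)
    rw [Real.coe_toNNReal L₁ hL₁, Real.coe_toNNReal L₂ hL₂] at this
    exact this.trans (by gcongr; exact hΩz y hy)
  have hquad := norm_setIntegral_sub_measureReal_smul_le hμΩ
    (integrableOn_retardedKernel hmeas hμΩ hd hΩx hfM hlip₁ hlip₂) hosc
  rw [hμΩ', Real.norm_eq_abs, smul_eq_mul] at hquad
  simp only [retardedKernel, ← mul_div_assoc] at hquad
  refine hquad.trans ?_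
  rw [show (4 : ℝ) / 3 = 1 / 3 + 1 by norm_num, Real.rpow_add hε, Real.rpow_one]
  have hc₀' : 0 ≤ c₀⁻¹ := by positivity
  have hL : L₁ + c₀⁻¹ * L₂ + M ≤ (1 + c₀⁻¹) * (L₁ + L₂ + M) := by nlinarith
  calc (L₁ + c₀⁻¹ * L₂ + M) * (Cd * ε ^ ((1 : ℝ) / 3)) / d ^ 2 * ε
      = (L₁ + c₀⁻¹ * L₂ + M) * (Cd * (ε ^ ((1 : ℝ) / 3) * ε)) / d ^ 2 := by ring
    _ ≤ (1 + c₀⁻¹) * (L₁ + L₂ + M) * (Cd * (ε ^ ((1 : ℝ) / 3) * ε)) / d ^ 2 := by gcongr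
    _ = (1 + c₀⁻¹) * Cd * (L₁ + L₂ + M) * (ε ^ ((1 : ℝ) / 3) * ε) / d ^ 2 := by ring
end
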